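/- Let f : ℝ^d → ℝ be differentiable, convex, L-smooth with L > 0, and (L0, L1)-smooth with L0 > 0, L1 > 0, and suppose f attains its minimum at x* with f* = f(x*). Let l* ≤ f*, σ² = f* − l*, T ≥ 1, and let the sequence (x_t)_{t=0,...,T} be generated by x_{t+1} = x_t − η_t ∇f(x_t) with η_t = (f(x_t) − l*)/(√T · ‖∇f(x_t)‖²) (where ∇f(x_t) ≠ 0 for all t < T). Then min_{0 ≤ t ≤ T−1} f(x_t) − f* ≤ (8 L0 ‖x_0 − x*‖² + 2σ²)/√T + 128 L1² L ‖x_0 − x*‖⁴ / T + 8 L1² σ⁴ L / (L0² T). -/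

import Mathlib

/-!
If the best gap `ε = min_t (f x_t - f*)` is at most `2σ²/√T` there is nothing to prove. Otherwise
every gap `Δ` along the run is at least `ε` and dominates the error `σ²` in the Polyak step, while
`L`-smoothness and `(L0, L1)`-smoothness together give `‖∇f x‖² ≤ 2 (L0 + √(2L) L1 √Δ) Δ`. With the
first-order convexity inequality this makes every step decrease `‖x_t - x*‖²` by at least
`ε / (4√T (L0 + √(2L) L1 √ε))`, so `√T ε ≤ 4 (L0 + √(2L) L1 √ε) ‖x_0 - x*‖²` after `T` steps;
according to which summand of `L0 + √(2L) L1 √ε` dominates, this gives the `1/√T` or the `1/T` term.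
-/

open InnerProductSpace Set

theorem monotoneOn_div_add_mul_sqrt {L0 K : ℝ} (hL0 : 0 < L0) (hK : 0 ≤ K) :
    MonotoneOn (fun s => s / (L0 + K * √s)) (Ici 0) := by
  intro a ha b hb hab
  have hsqrt : √a ≤ √b := Real.sqrt_le_sqrt hab
  simp only
  rw [div_le_div_iff₀ (by positivity) (by positivity)]
  have hcross : a * √b ≤ b * √a := by
    nth_rewrite 1 [← Real.mul_self_sqrt ha]
    nth_rewrite 2 [← Real.mul_self_sqrt hb]
    have := mul_le_mul_of_nonneg_left hsqrt (mul_nonneg (Real.sqrt_nonneg a) (Real.sqrt_nonneg b))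
    linarith
  nlinarith [mul_le_mul_of_nonneg_left hcross hK]

theorem div_le_two_mul_mul_sub_sq_mul {Δ σ2 r q η A : ℝ} (hΔ : 0 < Δ) (hq : 0 < q)
    (hqA : q ≤ 2 * A * Δ) (hr : 1 ≤ r) (hσ2 : 0 ≤ σ2) (hσΔ : 2 * σ2 ≤ Δ * r)
    (hη : r * q * η = Δ + σ2) :
    Δ / (4 * r * A) ≤ 2 * η * Δ - η ^ 2 * q := by
  have hA : 0 < A := by nlinarith
  have hη_ge : 1 / (2 * r * A) ≤ η := by
    rw [div_le_iff₀ (by positivity)]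
    nlinarith
  have hηq : η * q ≤ 3 / 2 * Δ := by
    have : r * (η * q) ≤ r * (3 / 2 * Δ) := by nlinarith
    exact le_of_mul_le_mul_left this (by linarith)
  have hη0 : 0 ≤ η := le_trans (by positivity) hη_ge
  calc Δ / (4 * r * A) = 1 / (2 * r * A) * (Δ / 2) := by field_simp; ring
    _ ≤ η * (2 * Δ - η * q) := by gcongr; linarith
    _ = 2 * η * Δ - η ^ 2 * q := by ring

theorem le_sub_mul_of_forall_lt_le_sub {a : ℕ → ℝ} {c : ℝ} {T : ℕ}
    (h : ∀ t < T, a (t + 1) ≤ a t - c) : a T ≤ a 0 - T * c := by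
  induction T with
  | zero => simp
  | succ n ih =>
    have := h n n.lt_succ_self
    have := ih fun t ht => h t (ht.trans n.lt_succ_self)
    push_cast
    linarith

theorem le_div_add_div_sq_of_sq_mul_le {r L0 K ε B : ℝ} (hr : 0 < r) (hL0 : 0 < L0) (hK : 0 ≤ K)
    (hε : 0 ≤ ε) (hB : 0 ≤ B) (h : r ^ 2 * (ε / (4 * r * (L0 + K * √ε))) ≤ B) :
    ε ≤ 8 * L0 * B / r + 64 * K ^ 2 * B ^ 2 / r ^ 2 := by
  have hA : 0 < L0 + K * √ε := by positivity
  have hlin : r * ε ≤ 4 * (L0 + K * √ε) * B := by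
    rw [show r ^ 2 * (ε / (4 * r * (L0 + K * √ε))) = r * ε / (4 * (L0 + K * √ε)) by
      field_simp, div_le_iff₀ (by positivity)] at h
    linarith
  have hfirst : 0 ≤ 8 * L0 * B / r := by positivity
  have hsecond : 0 ≤ 64 * K ^ 2 * B ^ 2 / r ^ 2 := by positivity
  rcases le_total (K * √ε) L0 with hsmall | hlarge
  · have : ε ≤ 8 * L0 * B / r := by
      rw [le_div_iff₀ hr]
      nlinarith
    linarith
  · have hpos : 0 < √ε := by
      by_contra! h0
      nlinarith [Real.sqrt_nonneg ε]
    have hroot : r * √ε ≤ 8 * K * B := by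
      have : r * √ε * √ε ≤ 8 * K * B * √ε := by
        rw [mul_assoc, Real.mul_self_sqrt hε]
        nlinarith
      exact le_of_mul_le_mul_right this hpos
    have : ε ≤ 64 * K ^ 2 * B ^ 2 / r ^ 2 := by
      rw [le_div_iff₀ (by positivity)]
      have := pow_le_pow_left₀ (by positivity) hroot 2
      rw [mul_pow, Real.sq_sqrt hε] at this
      linarith
    linarith

section GradientBounds

variable {E : Type*} [NormedAddCommGroup E] [InnerProductSpace ℝ E] [CompleteSpace E]
  {f : E → ℝ}

theorem hasDerivAt_comp_add_smul {x v : E} {t : ℝ} (hf : DifferentiableAt ℝ f (x + t • v)) :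
    HasDerivAt (fun s : ℝ => f (x + s • v)) ⟪gradient f (x + t • v), v⟫_ℝ t := by
  have hline : HasDerivAt (fun s : ℝ => x + s • v) v t := by
    simpa using ((hasDerivAt_id t).smul_const v).const_add x
  exact hf.hasGradientAt.hasFDerivAt.comp_hasDerivAt t hline

theorem ConvexOn.add_inner_gradient_le (hconv : ConvexOn ℝ univ f) {x : E}
    (hf : DifferentiableAt ℝ f x) (y : E) : f x + ⟪gradient f x, y - x⟫_ℝ ≤ f y := by
  have hline : ConvexOn ℝ univ (fun s : ℝ => f (x + s • (y - x))) := by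
    simpa [Function.comp_def, AffineMap.lineMap_apply_module', add_comm] using
      hconv.comp_affineMap (AffineMap.lineMap x y)
  have := hline.le_slope_of_hasDerivAt (mem_univ 0) (mem_univ 1) zero_lt_one
    (hasDerivAt_comp_add_smul (by simpa using hf))
  rw [slope_def_field] at this
  simp only [one_smul, zero_smul, add_zero, add_sub_cancel, sub_zero, div_one] at this
  linarith

theorem le_add_inner_gradient_add_sq (hf : Differentiable ℝ f) {x v : E} {M : ℝ}
    (hM : ∀ y, ‖y - x‖ ≤ ‖v‖ → ‖gradient f y - gradient f x‖ ≤ M * ‖y - x‖) :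
    f (x + v) ≤ f x + ⟪gradient f x, v⟫_ℝ + M / 2 * ‖v‖ ^ 2 := by
  have hφ : ∀ t : ℝ, HasDerivAt (fun s : ℝ => f (x + s • v) - s * ⟪gradient f x, v⟫_ℝ)
      (⟪gradient f (x + t • v) - gradient f x, v⟫_ℝ) t := fun t => by
    rw [inner_sub_left]
    exact (hasDerivAt_comp_add_smul (hf _)).sub (hasDerivAt_mul_const _)
  have hB : ∀ t : ℝ, HasDerivAt (fun s : ℝ => f x + M / 2 * ‖v‖ ^ 2 * s ^ 2)
      (M * ‖v‖ ^ 2 * t) t := fun t =>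
    (((hasDerivAt_pow 2 t).const_mul (M / 2 * ‖v‖ ^ 2)).const_add (f x)).congr_deriv
      (by push_cast; ring)
  have key := image_le_of_deriv_right_le_deriv_boundary (a := 0) (b := 1)
    (fun t _ => (hφ t).continuousAt.continuousWithinAt) (fun t _ => (hφ t).hasDerivWithinAt)
    (by simp) (fun t _ => (hB t).continuousAt.continuousWithinAt)
    (fun t _ => (hB t).hasDerivWithinAt) ?_ (right_mem_Icc.2 zero_le_one)
  · simp only [one_smul, one_mul, one_pow, mul_one] at key
    linarith
  intro t ht
  have hdist : ‖x + t • v - x‖ = t * ‖v‖ := by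
    rw [add_sub_cancel_left, norm_smul, Real.norm_of_nonneg ht.1]
  calc ⟪gradient f (x + t • v) - gradient f x, v⟫_ℝ
      ≤ ‖gradient f (x + t • v) - gradient f x‖ * ‖v‖ := real_inner_le_norm _ _
    _ ≤ M * (t * ‖v‖) * ‖v‖ := by
        gcongr
        rw [← hdist]
        exact hM _ (by rw [hdist]; exact mul_le_of_le_one_left (norm_nonneg v) ht.2.le)
    _ = M * ‖v‖ ^ 2 * t := by ring

theorem sq_norm_gradient_le_two_mul_sub (hf : Differentiable ℝ f) {x xstar : E}
    (hmin : ∀ y, f xstar ≤ f y) {M : ℝ} (hM0 : 0 < M)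
    (hM : ∀ y, ‖y - x‖ ≤ ‖gradient f x‖ / M → ‖gradient f y - gradient f x‖ ≤ M * ‖y - x‖) :
    ‖gradient f x‖ ^ 2 ≤ 2 * M * (f x - f xstar) := by
  set g := gradient f x
  have hv : ‖-M⁻¹ • g‖ = ‖g‖ / M := by
    rw [norm_smul, norm_neg, Real.norm_of_nonneg (inv_nonneg.2 hM0.le), inv_mul_eq_div]
  have hdesc := le_add_inner_gradient_add_sq hf (v := -M⁻¹ • g) (hv ▸ hM)
  rw [real_inner_smul_right, real_inner_self_eq_norm_sq, hv] at hdesc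
  have hgap : ‖g‖ ^ 2 / (2 * M) ≤ f x - f xstar := by
    have := (hmin _).trans hdesc
    field_simp at this ⊢
    linarith
  rwa [div_le_iff₀' (by positivity)] at hgap

theorem sq_norm_gradient_le_of_lipschitz (hf : Differentiable ℝ f) {xstar : E}
    (hmin : ∀ y, f xstar ≤ f y) {L : ℝ} (hL : 0 < L)
    (hLsmooth : ∀ x y, ‖gradient f x - gradient f y‖ ≤ L * ‖x - y‖) (x : E) :
    ‖gradient f x‖ ^ 2 ≤ 2 * L * (f x - f xstar) :=
  sq_norm_gradient_le_two_mul_sub hf hmin hL fun y _ => hLsmooth y x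

theorem sq_norm_gradient_le_of_L0L1_smooth (hf : Differentiable ℝ f) {xstar : E}
    (hmin : ∀ y, f xstar ≤ f y) {L0 L1 : ℝ} (hL0 : 0 < L0) (hL1 : 0 < L1)
    (hsmooth : ∀ x y, ‖x - y‖ ≤ 1 / L1 →
      ‖gradient f x - gradient f y‖ ≤ (L0 + L1 * ‖gradient f x‖) * ‖x - y‖) (x : E) :
    ‖gradient f x‖ ^ 2 ≤ 2 * (L0 + L1 * ‖gradient f x‖) * (f x - f xstar) := by
  have hM0 : 0 < L0 + L1 * ‖gradient f x‖ := by positivity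
  refine sq_norm_gradient_le_two_mul_sub hf hmin hM0 fun y hy => ?_
  have hrad : ‖gradient f x‖ / (L0 + L1 * ‖gradient f x‖) ≤ 1 / L1 := by
    rw [div_le_div_iff₀ hM0 hL1]
    linarith
  rw [norm_sub_rev, norm_sub_rev y] at *
  exact hsmooth x y (hy.trans hrad)

theorem sq_norm_gradient_le_of_smooth_of_L0L1_smooth (hf : Differentiable ℝ f) {xstar : E}
    (hmin : ∀ y, f xstar ≤ f y) {L L0 L1 : ℝ} (hL : 0 < L) (hL0 : 0 < L0) (hL1 : 0 < L1)
    (hLsmooth : ∀ x y, ‖gradient f x - gradient f y‖ ≤ L * ‖x - y‖)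
    (hsmooth : ∀ x y, ‖x - y‖ ≤ 1 / L1 →
      ‖gradient f x - gradient f y‖ ≤ (L0 + L1 * ‖gradient f x‖) * ‖x - y‖) (x : E) :
    ‖gradient f x‖ ^ 2 ≤
      2 * (L0 + √(2 * L) * L1 * √(f x - f xstar)) * (f x - f xstar) := by
  have hgap : 0 ≤ f x - f xstar := sub_nonneg.2 (hmin x)
  have hnorm : ‖gradient f x‖ ≤ √(2 * L) * √(f x - f xstar) := by
    rw [← Real.sqrt_mul (by positivity)]
    exact Real.le_sqrt_of_sq_le (sq_norm_gradient_le_of_lipschitz hf hmin hL hLsmooth x)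
  calc ‖gradient f x‖ ^ 2
      ≤ 2 * (L0 + L1 * ‖gradient f x‖) * (f x - f xstar) :=
        sq_norm_gradient_le_of_L0L1_smooth hf hmin hL0 hL1 hsmooth x
    _ ≤ 2 * (L0 + √(2 * L) * L1 * √(f x - f xstar)) * (f x - f xstar) := by
        have : L1 * ‖gradient f x‖ ≤ √(2 * L) * L1 * √(f x - f xstar) := by
          linarith [mul_le_mul_of_nonneg_left hnorm hL1.le]
        gcongr

theorem ConvexOn.sq_norm_sub_smul_gradient_sub_le (hconv : ConvexOn ℝ univ f) {x : E}
    (hf : DifferentiableAt ℝ f x) (xstar : E) {η : ℝ} (hη : 0 ≤ η) :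
    ‖x - η • gradient f x - xstar‖ ^ 2 ≤
      ‖x - xstar‖ ^ 2 - 2 * η * (f x - f xstar) + η ^ 2 * ‖gradient f x‖ ^ 2 := by
  have hinner : f x - f xstar ≤ ⟪gradient f x, x - xstar⟫_ℝ := by
    have := hconv.add_inner_gradient_le hf xstar
    rw [← neg_sub, inner_neg_right] at this
    linarith
  rw [sub_right_comm, norm_sub_sq_real, inner_smul_right, norm_smul, mul_pow,
    Real.norm_eq_abs, sq_abs, real_inner_comm]
  nlinarith

theorem sq_norm_inexactPolyak_sub_le (hdiff : Differentiable ℝ f) (hconv : ConvexOn ℝ univ f)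
    {xstar : E} (hmin : ∀ y, f xstar ≤ f y) {L L0 L1 : ℝ} (hL : 0 < L) (hL0 : 0 < L0)
    (hL1 : 0 < L1) (hLsmooth : ∀ x y, ‖gradient f x - gradient f y‖ ≤ L * ‖x - y‖)
    (hsmooth : ∀ x y, ‖x - y‖ ≤ 1 / L1 →
      ‖gradient f x - gradient f y‖ ≤ (L0 + L1 * ‖gradient f x‖) * ‖x - y‖)
    {x : E} {lstar ε r : ℝ} (hε : 0 < ε) (hεx : ε ≤ f x - f xstar) (hlstar : lstar ≤ f xstar)
    (hσε : 2 * (f xstar - lstar) < ε * r) (hr : 1 ≤ r) :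
    ‖x - ((f x - lstar) / (r * ‖gradient f x‖ ^ 2)) • gradient f x - xstar‖ ^ 2 ≤
      ‖x - xstar‖ ^ 2 - ε / (4 * r * (L0 + √(2 * L) * L1 * √ε)) := by
  set g := gradient f x
  set Δ := f x - f xstar
  set η := (f x - lstar) / (r * ‖g‖ ^ 2)
  have hΔ : 0 < Δ := hε.trans_le hεx
  have hg : g ≠ 0 := by
    intro h0
    have := hconv.add_inner_gradient_le (hdiff x) xstar
    rw [show gradient f x = 0 from h0, inner_zero_left] at this
    linarith
  have hq : 0 < ‖g‖ ^ 2 := by positivity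
  have hgrad := sq_norm_gradient_le_of_smooth_of_L0L1_smooth hdiff hmin hL hL0 hL1
    hLsmooth hsmooth x
  have hgain : Δ / (4 * r * (L0 + √(2 * L) * L1 * √Δ)) ≤ 2 * η * Δ - η ^ 2 * ‖g‖ ^ 2 :=
    div_le_two_mul_mul_sub_sq_mul hΔ hq (by linarith) hr (sub_nonneg.2 hlstar) (by nlinarith)
      (by simp only [η, Δ]; field_simp; ring)
  have hmono : ε / (4 * r * (L0 + √(2 * L) * L1 * √ε)) ≤
      Δ / (4 * r * (L0 + √(2 * L) * L1 * √Δ)) := by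
    have := monotoneOn_div_add_mul_sqrt (K := √(2 * L) * L1) hL0 (by positivity) hε.le
      (hε.le.trans hεx) hεx
    calc ε / (4 * r * (L0 + √(2 * L) * L1 * √ε))
        = ε / (L0 + √(2 * L) * L1 * √ε) / (4 * r) := by rw [div_div, mul_comm]
      _ ≤ Δ / (L0 + √(2 * L) * L1 * √Δ) / (4 * r) := by gcongr
      _ = Δ / (4 * r * (L0 + √(2 * L) * L1 * √Δ)) := by rw [div_div, mul_comm]
  have hη : 0 ≤ η := div_nonneg (by linarith) (by positivity)
  linarith [hconv.sq_norm_sub_smul_gradient_sub_le (hdiff x) xstar hη]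

end GradientBounds

/-- Convergence of Inexact Polyak Stepsize:
`min_{0≤t≤T−1} f(x_t) − f* ≤ (8L0‖x_0 − x*‖² + 2σ²)/√T + 128L1²L‖x_0 − x*‖⁴/T
  + 8L1²σ⁴L/(L0²T)`. -/
theorem inexact_polyak_convergence {d : ℕ}
    (f : EuclideanSpace ℝ (Fin d) → ℝ) (L L0 L1 : ℝ)
    (hL : 0 < L) (hL0 : 0 < L0) (hL1 : 0 < L1)
    (hdiff : Differentiable ℝ f)
    (hconv : ConvexOn ℝ Set.univ f)
    (hLsmooth : ∀ x y : EuclideanSpace ℝ (Fin d),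
      ‖gradient f x - gradient f y‖ ≤ L * ‖x - y‖)
    (hsmooth : ∀ x y : EuclideanSpace ℝ (Fin d), ‖x - y‖ ≤ 1 / L1 →
      ‖gradient f x - gradient f y‖ ≤ (L0 + L1 * ‖gradient f x‖) * ‖x - y‖)
    (xstar : EuclideanSpace ℝ (Fin d)) (hmin : ∀ y, f xstar ≤ f y)
    (lstar : ℝ) (hlstar : lstar ≤ f xstar)
    (σ2 : ℝ) (hσ2 : σ2 = f xstar - lstar)
    (T : ℕ) (hT : 1 ≤ T)
    (x : ℕ → EuclideanSpace ℝ (Fin d))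
    (hstep : ∀ t < T, x (t + 1) = x t -
      ((f (x t) - lstar) / (Real.sqrt T * ‖gradient f (x t)‖ ^ 2)) • gradient f (x t)) :
    (Finset.range T).inf' (Finset.nonempty_range_iff.mpr (by omega))
        (fun t => f (x t) - f xstar) ≤
      (8 * L0 * ‖x 0 - xstar‖ ^ 2 + 2 * σ2) / Real.sqrt T +
        128 * L1 ^ 2 * L * ‖x 0 - xstar‖ ^ 4 / T +
        8 * L1 ^ 2 * σ2 ^ 2 * L / (L0 ^ 2 * T) := by
  set D := ‖x 0 - xstar‖
  set r := √(T : ℝ)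
  set ε := (Finset.range T).inf' (Finset.nonempty_range_iff.mpr (by omega))
    (fun t => f (x t) - f xstar)
  have hT0 : (0 : ℝ) < T := by exact_mod_cast hT
  have hr_sq : r ^ 2 = T := Real.sq_sqrt hT0.le
  have hr : 1 ≤ r := Real.one_le_sqrt.2 (by exact_mod_cast hT)
  have hσ2_nonneg : 0 ≤ σ2 := by linarith
  have hthird : 0 ≤ 8 * L1 ^ 2 * σ2 ^ 2 * L / (L0 ^ 2 * T) := by positivity
  by_cases hsmall : ε ≤ 2 * σ2 / r
  · have hfirst : 2 * σ2 / r ≤ (8 * L0 * D ^ 2 + 2 * σ2) / r := by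
      gcongr
      exact le_add_of_nonneg_left (by positivity)
    have hsecond : 0 ≤ 128 * L1 ^ 2 * L * D ^ 4 / T := by positivity
    linarith
  rw [not_le] at hsmall
  have hε : 0 < ε := lt_of_le_of_lt (by positivity) hsmall
  have hdec : ∀ t < T, ‖x (t + 1) - xstar‖ ^ 2 ≤
      ‖x t - xstar‖ ^ 2 - ε / (4 * r * (L0 + √(2 * L) * L1 * √ε)) := fun t ht => by
    rw [hstep t ht]
    exact sq_norm_inexactPolyak_sub_le hdiff hconv hmin hL hL0 hL1 hLsmooth hsmooth hε
      (Finset.inf'_le _ (Finset.mem_range.2 ht)) hlstar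
      (by rw [← hσ2]; linarith [(div_lt_iff₀ (by positivity)).1 hsmall]) hr
  have htotal := le_sub_mul_of_forall_lt_le_sub (a := fun t => ‖x t - xstar‖ ^ 2) hdec
  have hbound := le_div_add_div_sq_of_sq_mul_le (r := r) (K := √(2 * L) * L1) (B := D ^ 2)
    (by positivity) hL0 (by positivity) hε.le (sq_nonneg D)
    (by rw [hr_sq]; nlinarith [sq_nonneg ‖x T - xstar‖])
  rw [mul_pow, Real.sq_sqrt (by positivity), hr_sq] at hbound
  have hfirst : 8 * L0 * D ^ 2 / r ≤ (8 * L0 * D ^ 2 + 2 * σ2) / r := by gcongr; linarith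
  have hsecond : 64 * (2 * L * L1 ^ 2) * (D ^ 2) ^ 2 / T = 128 * L1 ^ 2 * L * D ^ 4 / T := by
    ring
  linarith
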